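/- arXiv:1708.02708 — 4 statements merged into one kernel-verified Lean document; each statement's English description precedes it below -/
import Mathlib

section
/- The marginalization function is supermodular: for any a, b ⊆ L and any fixed assignment x of values to the coordinates in a ∪ b, n(a∪b)(x restricted to a∪b) + n(a∩b)(x restricted to a∩b) ≥ n(a)(x restricted to a) + n(b)(x restricted to b). -/
/-- The marginal of a contingency table `n` over the subset `a` of coordinates,
evaluated at (the restriction to `a` of) `x`. -/
noncomputable def marg {ι : Type*} [Fintype ι] [DecidableEq ι] {I : ι → Type*}
    [∀ i, Fintype (I i)] [∀ i, DecidableEq (I i)]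
    (n : (∀ i, I i) → ℝ) (a : Finset ι) (x : ∀ i, I i) : ℝ :=
  ∑ y ∈ Finset.univ.filter (fun y : ∀ i, I i => ∀ i ∈ a, y i = x i), n y

/-- The marginalization function is supermodular:
`n(a∪b) + n(a∩b) ≥ n(a) + n(b)`, evaluated at the relevant restrictions of `x`. -/
theorem marg_supermodular {ι : Type*} [Fintype ι] [DecidableEq ι] {I : ι → Type*}
    [∀ i, Fintype (I i)] [∀ i, DecidableEq (I i)]
    (n : (∀ i, I i) → ℝ) (hn : ∀ y, 0 ≤ n y)
    (a b : Finset ι) (x : ∀ i, I i) :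
    marg n a x + marg n b x ≤ marg n (a ∪ b) x + marg n (a ∩ b) x := by
  classical
  unfold marg
  set A := Finset.univ.filter (fun y : ∀ i, I i => ∀ i ∈ a, y i = x i) with hA
  set B := Finset.univ.filter (fun y : ∀ i, I i => ∀ i ∈ b, y i = x i) with hB
  have hUnion : Finset.univ.filter (fun y : ∀ i, I i => ∀ i ∈ a ∪ b, y i = x i)
      = A ∩ B := by
    ext y
    simp [hA, hB, Finset.mem_filter, Finset.mem_union, or_imp, forall_and]
  have hInter : A ∪ B ⊆
      Finset.univ.filter (fun y : ∀ i, I i => ∀ i ∈ a ∩ b, y i = x i) := by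
    intro y hy
    simp only [Finset.mem_union, hA, hB, Finset.mem_filter, Finset.mem_univ,
      true_and, Finset.mem_inter] at hy ⊢
    rintro i ⟨hia, hib⟩
    rcases hy with h | h
    · exact h i hia
    · exact h i hib
  rw [hUnion]
  have h1 : ∑ y ∈ A, n y + ∑ y ∈ B, n y
      = ∑ y ∈ A ∪ B, n y + ∑ y ∈ A ∩ B, n y :=
    (Finset.sum_union_inter).symm
  rw [h1, add_comm (∑ y ∈ A ∪ B, n y)]
  exact add_le_add le_rfl
    (Finset.sum_le_sum_of_subset_of_nonneg hInter (fun y _ _ => hn y))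
end

section
/- Ky Fan's inequality for p = 1: if f is supermodular on a finite distributive lattice, then for any elements x₁, …, x_q, Σ_{i=1}^q f(x_i) ≤ Σ_{k=1}^q f(⋁ over all k-subsets {i₁<⋯<i_k} of the meets x_{i₁} ∧ ⋯ ∧ x_{i_k}). -/
/-!
Write `Y_k(T) = ⋁_{S ⊆ T, #S = k} ⋀_{i ∈ S} x_i`, computed in `WithBotTop 𝕃` so that `Y_0(T) = ⊤`
and `Y_k(T) = ⊥` for `k > #T`. Adding an index `a ∉ T` gives
`Y_{k+1}(T ∪ {a}) = Y_{k+1}(T) ⊔ (Y_k(T) ⊓ x_a)`, and as `Y_{k+1}(T) ≤ Y_k(T)`, supermodularity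
applied to this pair reads
`f(Y_{k+1}(T)) + f(Y_k(T) ⊓ x_a) ≤ f(Y_{k+1}(T ∪ {a})) + f(Y_{k+1}(T) ⊓ x_a)`.
Summed over `k`, the terms `f(Y_k(T) ⊓ x_a)` telescope from `f(x_a)` down to `f(⊥)`, which is the
induction step from `T` to `T ∪ {a}`.
-/

open Finset

def Supermodular {α : Type*} [Lattice α] (f : α → ℝ) : Prop :=
  ∀ a b, f a + f b ≤ f (a ⊔ b) + f (a ⊓ b)

section Supermodular

variable {α : Type*} [Lattice α]

theorem apply_add_apply_le_of_comparable (f : α → ℝ) {a b : α} (h : a ≤ b ∨ b ≤ a) :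
    f a + f b ≤ f (a ⊔ b) + f (a ⊓ b) := by
  rcases h with h | h
  · rw [sup_eq_right.2 h, inf_eq_left.2 h, add_comm]
  · rw [sup_eq_left.2 h, inf_eq_right.2 h]

/-- The values of `g` at `⊥` and `⊤` are arbitrary: these points are comparable with everything. -/
theorem WithBotTop.supermodular_of_comp_coe {g : WithBotTop α → ℝ}
    (hg : Supermodular (g ∘ WithBotTop.coe)) : Supermodular g := by
  intro a b
  induction a using WithBotTop.rec with
  | bot => exact apply_add_apply_le_of_comparable g (.inl bot_le)
  | top => exact apply_add_apply_le_of_comparable g (.inr le_top)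
  | coe a =>
    induction b using WithBotTop.rec with
    | bot => exact apply_add_apply_le_of_comparable g (.inr bot_le)
    | top => exact apply_add_apply_le_of_comparable g (.inl le_top)
    | coe b => exact hg a b

def WithBotTop.coeLatticeHom (α : Type*) [Lattice α] : LatticeHom α (WithBotTop α) where
  toFun := WithBotTop.coe
  map_sup' a b := (congrArg WithBot.some (WithTop.coe_sup a b)).trans (WithBot.coe_sup _ _)
  map_inf' a b := (congrArg WithBot.some (WithTop.coe_inf a b)).trans (WithBot.coe_inf _ _)

end Supermodular

/-- The lattice analogue of `Finset.esymm`: the join over all `k`-subsets of `T` of the meets. -/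
def latticeEsymm {α ι : Type*} [Lattice α] [BoundedOrder α] (x : ι → α) (T : Finset ι) (k : ℕ) :
    α :=
  (T.powersetCard k).sup fun S => S.inf x

section LatticeEsymm

variable {α ι : Type*}

section Lattice

variable [Lattice α] [BoundedOrder α] (x : ι → α) (T : Finset ι)

theorem latticeEsymm_zero : latticeEsymm x T 0 = ⊤ := by
  simp [latticeEsymm]

theorem latticeEsymm_of_card_lt {k : ℕ} (h : #T < k) : latticeEsymm x T k = ⊥ := by
  rw [latticeEsymm, powersetCard_eq_empty.2 h, sup_empty]

theorem latticeEsymm_succ_le (k : ℕ) : latticeEsymm x T (k + 1) ≤ latticeEsymm x T k := by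
  refine Finset.sup_le fun S hS => ?_
  obtain ⟨hST, hcard⟩ := mem_powersetCard.1 hS
  obtain ⟨S', hS'S, hS'card⟩ := exists_subset_card_eq (s := S) (n := k) (by omega)
  exact (inf_mono hS'S).trans
    (le_sup (f := fun S => S.inf x) (mem_powersetCard.2 ⟨hS'S.trans hST, hS'card⟩))

theorem map_sup'_inf'_powersetCard {β : Type*} [Lattice β] (φ : LatticeHom β α) (x : ι → β)
    (k : ℕ) (H : (T.powersetCard k).attach.Nonempty) (hS : ∀ S : T.powersetCard k, S.1.Nonempty) :
    φ ((T.powersetCard k).attach.sup' H fun S => S.1.inf' (hS S) x) =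
      latticeEsymm (φ ∘ x) T k := by
  rw [map_finset_sup', sup'_eq_sup, latticeEsymm, ← sup_attach (T.powersetCard k)]
  refine sup_congr rfl fun S _ => ?_
  rw [Function.comp_apply, map_finset_inf', inf'_eq_inf]

end Lattice

variable [DistribLattice α] [BoundedOrder α] [DecidableEq ι] (x : ι → α)

theorem latticeEsymm_insert {T : Finset ι} {a : ι} (ha : a ∉ T) (k : ℕ) :
    latticeEsymm x (insert a T) (k + 1) =
      latticeEsymm x T (k + 1) ⊔ latticeEsymm x T k ⊓ x a := by
  simp only [latticeEsymm, powersetCard_succ_insert ha, sup_union, sup_image,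
    Finset.sup_inf_distrib_right]
  congr 2 with S
  simp [inf_comm]

variable {f : α → ℝ} (hf : Supermodular f)
include hf

theorem add_sum_latticeEsymm_le_sum_latticeEsymm_insert {T : Finset ι} {a : ι} (ha : a ∉ T) :
    f (x a) + ∑ k ∈ range #T, f (latticeEsymm x T (k + 1)) ≤
      ∑ k ∈ range (#T + 1), f (latticeEsymm x (insert a T) (k + 1)) := by
  set Y := latticeEsymm x T
  have step (k : ℕ) : f (Y (k + 1)) + f (Y k ⊓ x a) ≤
      f (latticeEsymm x (insert a T) (k + 1)) + f (Y (k + 1) ⊓ x a) := by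
    have h := hf (Y (k + 1)) (Y k ⊓ x a)
    rwa [← inf_assoc, inf_eq_left.2 (latticeEsymm_succ_le x T k), ← latticeEsymm_insert x ha] at h
  have hY_top : Y 0 = ⊤ := latticeEsymm_zero x T
  have hY_bot : Y (#T + 1) = ⊥ := latticeEsymm_of_card_lt x T (Nat.lt_succ_self _)
  have hsum := sum_le_sum fun k (_ : k ∈ range (#T + 1)) => step k
  rw [sum_add_distrib, sum_add_distrib, sum_range_succ (fun k => f (Y (k + 1))),
    sum_range_succ' (fun k => f (Y k ⊓ x a)), sum_range_succ (fun k => f (Y (k + 1) ⊓ x a)),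
    hY_top, hY_bot, top_inf_eq, bot_inf_eq] at hsum
  linarith

theorem sum_le_sum_latticeEsymm (T : Finset ι) :
    ∑ i ∈ T, f (x i) ≤ ∑ k ∈ range #T, f (latticeEsymm x T (k + 1)) := by
  induction T using Finset.induction_on with
  | empty => simp
  | insert a T ha ih =>
    rw [sum_insert ha, card_insert_of_notMem ha]
    linarith [add_sum_latticeEsymm_le_sum_latticeEsymm_insert x hf ha]

end LatticeEsymm

/-- Ky Fan's inequality for `p = 1`: for a supermodular `f` on a distributive lattice
and elements `x 1, …, x q`,
`∑ i f(x i) ≤ ∑_{k=1}^q f(⋁ over k-subsets of the meets)`. -/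
theorem fan_inequality_p_one {𝕃 : Type*} [DistribLattice 𝕃] (f : 𝕃 → ℝ)
    (hf : ∀ a b : 𝕃, f a + f b ≤ f (a ⊔ b) + f (a ⊓ b))
    (q : ℕ) (x : Fin q → 𝕃) :
    ∑ i, f (x i) ≤
      ∑ k ∈ (Finset.Icc 1 q).attach,
        f (((Finset.univ.powersetCard (k : ℕ)).attach).sup'
            (Finset.attach_nonempty_iff.mpr
              (Finset.powersetCard_nonempty.mpr
                (by simpa using (Finset.mem_Icc.mp k.2).2)))
            (fun s => s.1.inf'
              (Finset.card_pos.mp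
                (by
                  have hs := (Finset.mem_powersetCard.mp s.2).2
                  have hk := (Finset.mem_Icc.mp k.2).1
                  omega))
              x)) := by
  set ι := WithBotTop.coeLatticeHom 𝕃
  set g := Function.extend WithBotTop.coe f 0
  have hg : g ∘ WithBotTop.coe = f := Function.extend_comp WithBotTop.coe_injective f 0
  have hg_super : Supermodular g := WithBotTop.supermodular_of_comp_coe (hg ▸ hf)
  calc ∑ i, f (x i) = ∑ i, g (ι (x i)) := by rw [← hg]; rfl
    _ ≤ ∑ k ∈ range q, g (latticeEsymm (ι ∘ x) univ (k + 1)) := by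
      simpa using sum_le_sum_latticeEsymm (ι ∘ x) hg_super univ
    _ = ∑ k ∈ Icc 1 q, g (latticeEsymm (ι ∘ x) univ k) := by
      rw [← Ico_add_one_right_eq_Icc, sum_Ico_eq_sum_range, add_tsub_cancel_right]
      simp only [add_comm 1]
    _ = _ := by
      rw [← sum_attach]
      refine sum_congr rfl fun k _ => ?_
      rw [← hg]
      exact congrArg g (map_sup'_inf'_powersetCard univ ι x k _ _).symm
end

section
/- Fréchet lower bound for 3-way tables from 2-dimensional marginals: for a contingency table n on I₁ × I₂ × I₃, each cell entry n_{i,j,k} is at least max over the three expressions n_{i,j,+} + n_{i,+,k} − n_{i,+,+}, n_{i,j,+} + n_{+,j,k} − n_{+,j,+}, n_{i,+,k} + n_{+,j,k} − n_{+,+,k}, and 0. -/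
lemma frechet_aux {A B : Type*} [Fintype A] [Fintype B] (f : A → B → ℝ)
    (hf : ∀ a b, 0 ≤ f a b) (a : A) (b : B) :
    (∑ b', f a b') + (∑ a', f a' b) - ∑ a', ∑ b', f a' b' ≤ f a b := by
  classical
  have h1 : f a b + ∑ a' ∈ Finset.univ.erase a, f a' b = ∑ a', f a' b :=
    Finset.add_sum_erase _ (fun a' => f a' b) (Finset.mem_univ a)
  have h2 : (∑ b', f a b') + ∑ a' ∈ Finset.univ.erase a, ∑ b', f a' b'
      = ∑ a', ∑ b', f a' b' := Finset.add_sum_erase _ (fun a' => ∑ b', f a' b') (Finset.mem_univ a)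
  have h3 : ∑ a' ∈ Finset.univ.erase a, f a' b
      ≤ ∑ a' ∈ Finset.univ.erase a, ∑ b', f a' b' := by
    refine Finset.sum_le_sum fun a' _ => ?_
    exact Finset.single_le_sum (fun b' _ => hf a' b') (Finset.mem_univ b)
  linarith

/-- Fréchet lower bound for 3-way tables from 2-dimensional marginals. -/
theorem frechet_lower_three_way_two_dim {I₁ I₂ I₃ : Type*}
    [Fintype I₁] [Fintype I₂] [Fintype I₃]
    (n : I₁ × I₂ × I₃ → ℝ) (hn : ∀ p, 0 ≤ n p) (i : I₁) (j : I₂) (k : I₃) :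
    max (max ((∑ k', n (i, j, k')) + (∑ j', n (i, j', k)) - ∑ j', ∑ k', n (i, j', k'))
             ((∑ k', n (i, j, k')) + (∑ i', n (i', j, k)) - ∑ i', ∑ k', n (i', j, k')))
        (max ((∑ j', n (i, j', k)) + (∑ i', n (i', j, k)) - ∑ i', ∑ j', n (i', j', k))
             0)
      ≤ n (i, j, k) := by
  refine max_le (max_le ?_ ?_) (max_le ?_ (hn _))
  · exact frechet_aux (fun j' k' => n (i, j', k')) (fun _ _ => hn _) j k
  · exact frechet_aux (fun i' k' => n (i', j, k')) (fun _ _ => hn _) i k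
  · exact frechet_aux (fun i' j' => n (i', j', k)) (fun _ _ => hn _) i j
end

section
/- Abstract version of the Dobra–Fienberg bound: if f is a supermodular function on a distributive lattice and C₁,…,C_d are lattice elements with S_j = (C₁ ∨ ⋯ ∨ C_{j−1}) ∧ C_j for j = 2,…,d, then f(C₁ ∨ ⋯ ∨ C_d) ≥ Σ_{i=1}^d f(C_i) − Σ_{j=2}^d f(S_j). -/
/-!
Write `Pₙ = C₀ ∨ ⋯ ∨ Cₙ`. Since `Pₙ₊₁ = Pₙ ∨ Cₙ₊₁`, supermodularity applied to `Pₙ` and `Cₙ₊₁` gives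
`f(Pₙ) + f(Cₙ₊₁) ≤ f(Pₙ₊₁) + f(Pₙ ∧ Cₙ₊₁)`; summing these inequalities telescopes to the bound.
-/

open Finset

theorem sum_le_partialSups_add_sum_inf {α β : Type*} [Lattice α] [AddCommMonoid β]
    [PartialOrder β] [IsOrderedAddMonoid β] {f : α → β}
    (hf : ∀ a b : α, f a + f b ≤ f (a ⊔ b) + f (a ⊓ b)) (C : ℕ → α) (n : ℕ) :
    ∑ i ∈ range (n + 1), f (C i)
      ≤ f (partialSups C n) + ∑ j ∈ range n, f (partialSups C j ⊓ C (j + 1)) := by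
  induction n with
  | zero => simp
  | succ n ih =>
    calc ∑ i ∈ range (n + 2), f (C i)
        = ∑ i ∈ range (n + 1), f (C i) + f (C (n + 1)) := sum_range_succ _ _
      _ ≤ f (partialSups C n) + ∑ j ∈ range n, f (partialSups C j ⊓ C (j + 1))
            + f (C (n + 1)) := add_le_add_left ih _
      _ = f (partialSups C n) + f (C (n + 1))
            + ∑ j ∈ range n, f (partialSups C j ⊓ C (j + 1)) := add_right_comm _ _ _
      _ ≤ f (partialSups C n ⊔ C (n + 1)) + f (partialSups C n ⊓ C (n + 1))
            + ∑ j ∈ range n, f (partialSups C j ⊓ C (j + 1)) := add_le_add_left (hf _ _) _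
      _ = f (partialSups C (n + 1))
            + ∑ j ∈ range (n + 1), f (partialSups C j ⊓ C (j + 1)) := by
        rw [partialSups_add_one, sum_range_succ, add_assoc, add_comm (f (_ ⊓ _))]

/-- Abstract Dobra–Fienberg bound: for a supermodular `f` on a distributive lattice and
elements `C 0, …, C (d-1)`, with `S j = (C 0 ∨ ⋯ ∨ C (j-1)) ∧ C j`,
`f(C 0 ∨ ⋯ ∨ C (d-1)) ≥ Σ_i f(C i) − Σ_{j=1}^{d-1} f(S j)`. -/
theorem abstract_dobra_fienberg {𝕃 : Type*} [DistribLattice 𝕃] (f : 𝕃 → ℝ)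
    (hf : ∀ a b : 𝕃, f a + f b ≤ f (a ⊔ b) + f (a ⊓ b))
    (d : ℕ) (hd : 1 ≤ d) (C : ℕ → 𝕃) :
    (∑ i ∈ Finset.range d, f (C i))
      - ∑ j ∈ Finset.range (d - 1),
          f (((Finset.range (j + 1)).sup' Finset.nonempty_range_add_one C) ⊓ C (j + 1))
      ≤ f ((Finset.range d).sup' (Finset.nonempty_range_iff.mpr (by omega)) C) := by
  obtain ⟨n, rfl⟩ := Nat.exists_eq_add_of_le' hd
  simpa only [partialSups_eq_sup'_range, Nat.add_sub_cancel, sub_le_iff_le_add]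
    using sum_le_partialSups_add_sum_inf hf C n
end
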